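/- arXiv:1707.02095 — 10 statements merged into one kernel-verified Lean document; each statement's English description precedes it below -/
import Mathlib

section
/- Let 𝔤 be a Lie algebra with extremal form g, and let x be a pure extremal element. For each λ ∈ F, the map exp(x,λ) : 𝔤 → 𝔤 defined by exp(x,λ)(y) = y + λ[x,y] + λ²g(x,y)x is an automorphism of the Lie algebra 𝔤. -/
/-- For a pure extremal element `x` of a Lie algebra `𝔤` with extremal form `g`
(symmetric and associative), and any `λ ∈ F`, the map
`exp(x,λ) : y ↦ y + λ•⁅x,y⁆ + (λ² g(x,y))•x` is an automorphism of the Lie algebra `𝔤`. -/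
theorem stmt1 {F L : Type*} [Field F] [LieRing L] [LieAlgebra F L]
    (h2 : (2 : F) ≠ 0)
    (g : L →ₗ[F] L →ₗ[F] F)
    (hsym : ∀ a b : L, g a b = g b a)
    (hassoc : ∀ a b c : L, g ⁅a, b⁆ c = g a ⁅b, c⁆)
    (x : L) (hx : x ≠ 0)
    (hxe : ∀ z : L, ⁅x, ⁅x, z⁆⁆ = (2 * g x z) • x)
    (hpure : ∃ z : L, ⁅x, ⁅x, z⁆⁆ ≠ 0)
    (lam : F) :
    ∃ e : L ≃ₗ⁅F⁆ L, ∀ y : L, e y = y + lam • ⁅x, y⁆ + (lam ^ 2 * g x y) • x := by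
  -- g x ⁅x,w⁆ = 0
  have hgxl : ∀ w : L, g x ⁅x, w⁆ = 0 := by
    intro w
    have h := hassoc x x w
    rw [lie_self] at h
    simpa using h.symm
  -- g x x = 0
  have hgxx : g x x = 0 := by
    obtain ⟨z, hz⟩ := hpure
    rw [hxe] at hz
    have hgz : g x z ≠ 0 := by
      intro h; rw [h] at hz; simp at hz
    have h := hgxl ⁅x, z⁆
    rw [hxe, map_smul] at h
    have h2z : (2 * g x z) ≠ 0 := mul_ne_zero h2 hgz
    simpa [h2z] using h
  -- Premet-style identity
  have key : ∀ y z : L, ⁅(⁅x, y⁆), (⁅x, z⁆)⁆ =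
      (g x ⁅y, z⁆) • x + (g x z) • ⁅x, y⁆ - (g x y) • ⁅x, z⁆ := by
    intro y z
    have e2 : ⁅y, ⁅x, z⁆⁆ = ⁅x, ⁅y, z⁆⁆ - ⁅(⁅x, y⁆), z⁆ := by
      rw [leibniz_lie x y z]; abel
    have e5 : ⁅(⁅x, y⁆), (⁅x, z⁆)⁆ =
        (2 * g x ⁅y, z⁆) • x + (2 * g x z) • ⁅x, y⁆ - (2 * g x y) • ⁅x, z⁆
          - ⁅(⁅x, y⁆), (⁅x, z⁆)⁆ := by
      calc ⁅(⁅x, y⁆), (⁅x, z⁆)⁆ = ⁅x, ⁅y, ⁅x, z⁆⁆⁆ - ⁅y, ⁅x, ⁅x, z⁆⁆⁆ := lie_lie x y ⁅x, z⁆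
        _ = _ := by
            rw [hxe z, e2, lie_sub, leibniz_lie x ⁅x, y⁆ z, hxe ⁅y, z⁆, hxe y]
            rw [smul_lie, lie_smul, (lie_skew y x).symm]
            module
    have e4 : (2:F) • ⁅(⁅x, y⁆), (⁅x, z⁆)⁆ =
        (2:F) • ((g x ⁅y, z⁆) • x + (g x z) • ⁅x, y⁆ - (g x y) • ⁅x, z⁆) := by
      rw [two_smul]
      nth_rewrite 2 [e5]
      rw [show ((2:F) • ((g x ⁅y, z⁆) • x + (g x z) • ⁅x, y⁆ - (g x y) • ⁅x, z⁆)) =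
        (2 * g x ⁅y, z⁆) • x + (2 * g x z) • ⁅x, y⁆ - (2 * g x y) • ⁅x, z⁆ by module]
      abel
    exact smul_right_injective L h2 e4
  -- the exponential maps
  set f : F → L → L := fun t y => y + t • ⁅x, y⁆ + (t ^ 2 * g x y) • x with hf
  have hadd : ∀ t (a b : L), f t (a + b) = f t a + f t b := by
    intro t a b
    simp only [hf, lie_add, map_add, mul_add, add_smul, smul_add]
    abel
  have hsmul : ∀ t (c : F) (a : L), f t (c • a) = c • f t a := by
    intro t c a
    simp only [hf, lie_smul, map_smul, smul_eq_mul, smul_add, smul_smul]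
    ring_nf
  have hcomp : ∀ (s t : F) (y : L), f s (f t y) = f (s + t) y := by
    intro s t y
    simp only [hf]
    simp only [lie_add, lie_smul, map_add, map_smul, smul_eq_mul, hxe, hgxl, hgxx,
      lie_self, smul_smul, smul_zero, mul_zero, add_zero, smul_add]
    module
  have hlie : ∀ (y z : L), f lam ⁅y, z⁆ = ⁅f lam y, f lam z⁆ := by
    intro y z
    simp only [hf, add_lie, lie_add, smul_lie, lie_smul, lie_self, smul_zero, smul_smul]
    rw [key, show ⁅y, ⁅x, z⁆⁆ = ⁅x, ⁅y, z⁆⁆ - ⁅(⁅x, y⁆), z⁆ by rw [leibniz_lie x y z]; abel,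
      show ⁅(⁅x, y⁆), x⁆ = -⁅x, ⁅x, y⁆⁆ from (lie_skew ⁅x, y⁆ x).symm,
      hxe, hxe, (lie_skew y x).symm]
    module
  refine ⟨{ toFun := f lam,
            map_add' := hadd lam,
            map_smul' := hsmul lam,
            map_lie' := by intros a b; show f lam ⁅a, b⁆ = ⁅f lam a, f lam b⁆; exact hlie a b,
            invFun := f (-lam),
            left_inv := fun y => by show f (-lam) (f lam y) = y; rw [hcomp]; simp [hf],
            right_inv := fun y => by show f lam (f (-lam) y) = y; rw [hcomp]; simp [hf] }, fun y => rfl⟩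
end

section
/- Let (V,f) be a symplectic space over a field F of characteristic ≠ 2 and let 𝔰_f be the Lie algebra on S_f = span{v ⊗ f_v : v ∈ V} ⊆ V ⊗ V*. Then for every nonzero v ∈ V the element v ⊗ f_v is an extremal element of 𝔰_f: for all w ∈ V, [v⊗f_v, [v⊗f_v, w⊗f_w]] = 2 f(v,w)² (v⊗f_v). -/
/-!
Composing the rank-one maps gives `x * y * x = f(v,w) f(w,v) • x` and `x * x = f(v,v) • x = 0`
for `x = v ⊗ f_v`, `y = w ⊗ f_w`, so the double bracket `x²y - 2xyx + yx²` collapses to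
`-2 f(v,w) f(w,v) • x = 2 f(v,w)² • x`. Since `ad x ^ 2` is linear, the extremality condition
then spreads from the spanning tensors to all of `𝔰_f`.
-/

/-- The "pure tensor" `v ⊗ f_v`, viewed as the endomorphism `u ↦ f(v,u) • v` of `V`. -/
noncomputable def rk1 {F V : Type*} [Field F] [AddCommGroup V] [Module F V]
    (f : V →ₗ[F] V →ₗ[F] F) (v : V) : Module.End F V :=
  (f v).smulRight v

theorem lie_lie_of_mul_self_eq_zero {A : Type*} [Ring A] {x : A} (hx : x * x = 0) (y : A) :
    ⁅x, ⁅x, y⁆⁆ = -(2 * (x * y * x)) := by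
  calc ⁅x, ⁅x, y⁆⁆ = x * x * y - 2 * (x * y * x) + y * (x * x) := by
        simp only [Ring.lie_def]; noncomm_ring
    _ = -(2 * (x * y * x)) := by rw [hx, zero_mul, mul_zero, zero_sub, add_zero]

theorem exists_lie_lie_eq_smul_of_mem_span {R L : Type*} [CommRing R] [LieRing L]
    [LieAlgebra R L] {x : L} {s : Set L} (hs : ∀ y ∈ s, ∃ c : R, ⁅x, ⁅x, y⁆⁆ = c • x)
    {y : L} (hy : y ∈ Submodule.span R s) : ∃ c : R, ⁅x, ⁅x, y⁆⁆ = c • x := by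
  have hsq (z : L) : (LieAlgebra.ad R L x ^ 2) z = ⁅x, ⁅x, z⁆⁆ := by
    rw [pow_two, Module.End.mul_apply, LieAlgebra.ad_apply, LieAlgebra.ad_apply]
  have hspan : Submodule.span R s ≤ (R ∙ x).comap (LieAlgebra.ad R L x ^ 2) := by
    refine Submodule.span_le.2 fun z hz => ?_
    obtain ⟨c, hc⟩ := hs z hz
    exact Submodule.mem_span_singleton.2 ⟨c, by rw [hsq, hc]⟩
  obtain ⟨c, hc⟩ := Submodule.mem_span_singleton.1 (hspan hy)
  exact ⟨c, by rw [← hsq, hc]⟩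

section RankOne

variable {F V : Type*} [Field F] [AddCommGroup V] [Module F V] (f : V →ₗ[F] V →ₗ[F] F)

theorem rk1_apply (v u : V) : rk1 f v u = f v u • v := rfl

theorem rk1_mul_rk1 (v w : V) : rk1 f v * rk1 f w = f v w • (f w).smulRight v := by
  ext u
  simp only [Module.End.mul_apply, rk1_apply, map_smul, LinearMap.smul_apply,
    LinearMap.smulRight_apply, smul_smul, mul_comm]

theorem rk1_mul_rk1_mul_rk1 (v w : V) :
    rk1 f v * rk1 f w * rk1 f v = (f v w * f w v) • rk1 f v := by
  ext u
  simp only [Module.End.mul_apply, rk1_apply, map_smul, LinearMap.smul_apply, smul_smul]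
  congr 1
  ring

theorem lie_rk1_lie_rk1_rk1 (halt : f.IsAlt) (v w : V) :
    ⁅rk1 f v, ⁅rk1 f v, rk1 f w⁆⁆ = (2 * f v w ^ 2) • rk1 f v := by
  have hvv : rk1 f v * rk1 f v = 0 := by rw [rk1_mul_rk1, halt.self_eq_zero, zero_smul]
  rw [lie_lie_of_mul_self_eq_zero hvv, rk1_mul_rk1_mul_rk1, ← halt.neg v w, two_mul]
  module

end RankOne

theorem stmt3_general {F V : Type*} [Field F] [AddCommGroup V] [Module F V]
    (f : V →ₗ[F] V →ₗ[F] F) (halt : ∀ v : V, f v v = 0)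
    (v : V) :
    (∀ w : V, ⁅rk1 f v, ⁅rk1 f v, rk1 f w⁆⁆ = (2 * f v w ^ 2) • rk1 f v) ∧
    ∀ y ∈ Submodule.span F (Set.range (rk1 f)),
      ∃ c : F, ⁅rk1 f v, ⁅rk1 f v, y⁆⁆ = c • rk1 f v := by
  have hgen (w : V) := lie_rk1_lie_rk1_rk1 f halt v w
  -- the commutator bracket of `Module.End F V` is not a global `LieRing` instance
  let _ : LieRing (Module.End F V) := LieRing.ofAssociativeRing
  refine ⟨hgen, fun y hy => exists_lie_lie_eq_smul_of_mem_span ?_ hy⟩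
  rintro _ ⟨w, rfl⟩
  exact ⟨_, hgen w⟩

/-- In the Lie algebra `𝔰_f` spanned by the tensors `v ⊗ f_v`, every
`v ⊗ f_v` (for `v ≠ 0`) is extremal: `⁅v⊗f_v, ⁅v⊗f_v, w⊗f_w⁆⁆ = 2 f(v,w)² • (v⊗f_v)`,
and hence `⁅v⊗f_v, ⁅v⊗f_v, y⁆⁆ ∈ F • (v⊗f_v)` for every `y ∈ 𝔰_f`. -/
theorem stmt3 {F V : Type*} [Field F] [AddCommGroup V] [Module F V]
    (h2 : (2 : F) ≠ 0)
    (f : V →ₗ[F] V →ₗ[F] F) (halt : ∀ v : V, f v v = 0)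
    (v : V) (hv : v ≠ 0) :
    (∀ w : V, ⁅rk1 f v, ⁅rk1 f v, rk1 f w⁆⁆ = (2 * f v w ^ 2) • rk1 f v) ∧
    ∀ y ∈ Submodule.span F (Set.range (rk1 f)),
      ∃ c : F, ⁅rk1 f v, ⁅rk1 f v, y⁆⁆ = c • rk1 f v :=
  stmt3_general f halt v
end

section
/- Let (V,f) be a symplectic space over a field F of characteristic ≠ 2. In the Lie algebra 𝔰_f, the extremal element v ⊗ f_v (for v ≠ 0) is pure (i.e., [v⊗f_v,[v⊗f_v,y]] ≠ 0 for some y) if and only if v does not lie in the radical of f. -/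
section rk1

variable {F V : Type*} [Field F] [AddCommGroup V] [Module F V] (f : V →ₗ[F] V →ₗ[F] F)

theorem rk1_mul_mul_rk1 (v : V) (T : Module.End F V) :
    rk1 f v * T * rk1 f v = f v (T v) • rk1 f v := by
  ext u
  simp only [rk1, Module.End.mul_apply, LinearMap.smul_apply, LinearMap.smulRight_apply,
    map_smul, smul_smul, mul_comm]

theorem rk1_mul_self {f : V →ₗ[F] V →ₗ[F] F} (hf : f.IsAlt) (v : V) : rk1 f v * rk1 f v = 0 := by
  simpa [hf.self_eq_zero v] using rk1_mul_mul_rk1 f v 1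

theorem rk1_eq_zero_iff {v : V} (hv : v ≠ 0) : rk1 f v = 0 ↔ f v = 0 := by
  simp [rk1, hv]

theorem lie_rk1_lie_rk1 {f : V →ₗ[F] V →ₗ[F] F} (hf : f.IsAlt) (v w : V) :
    ⁅rk1 f v, ⁅rk1 f v, rk1 f w⁆⁆ = (2 * f v w ^ 2) • rk1 f v := by
  have hwv : f w v = -f v w := (hf.neg v w).symm
  rw [lie_lie_of_mul_self_eq_zero (rk1_mul_self hf v), rk1_mul_mul_rk1, rk1_apply,
    map_smul, smul_eq_mul, hwv, two_mul, ← add_smul, ← neg_smul]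
  congr 1
  ring

end rk1

/-- In `𝔰_f`, the extremal element `v ⊗ f_v` (for `v ≠ 0`) is pure, i.e.
`⁅v⊗f_v, ⁅v⊗f_v, y⁆⁆ ≠ 0` for some `y ∈ 𝔰_f`, if and only if `v` does not lie in the
radical of `f`. -/
theorem stmt4 {F V : Type*} [Field F] [AddCommGroup V] [Module F V]
    (h2 : (2 : F) ≠ 0)
    (f : V →ₗ[F] V →ₗ[F] F) (halt : ∀ v : V, f v v = 0)
    (v : V) (hv : v ≠ 0) :
    (∃ y ∈ Submodule.span F (Set.range (rk1 f)),
        ⁅rk1 f v, ⁅rk1 f v, y⁆⁆ ≠ 0) ↔ ¬(∀ w : V, f v w = 0) := by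
  constructor
  · rintro ⟨y, -, hne⟩ hrad
    have hx : rk1 f v = 0 := (rk1_eq_zero_iff f hv).mpr (LinearMap.ext hrad)
    simp [hx, Ring.lie_def] at hne
  · intro hrad
    obtain ⟨w, hw⟩ := not_forall.mp hrad
    have hx : rk1 f v ≠ 0 := (rk1_eq_zero_iff f hv).not.mpr fun h => hw (by simp [h])
    refine ⟨rk1 f w, Submodule.subset_span ⟨w, rfl⟩, ?_⟩
    rw [lie_rk1_lie_rk1 halt]
    exact smul_ne_zero (mul_ne_zero h2 (pow_ne_zero 2 hw)) hx
end

section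
/- Let (V,f) be a symplectic space over a field F of characteristic ≠ 2. The alternating form f is nondegenerate if and only if the extremal form g on the Lie algebra 𝔰_f (determined by g(v⊗f_v, w⊗f_w) = f(v,w)²) is nondegenerate. -/
/-- For a symplectic space `(V,f)` (so `f` is a nontrivial alternating form)
over a field of characteristic ≠ 2, the form `f` is nondegenerate if and only if the
extremal form `g` of `𝔰_f` (determined by `g(v⊗f_v, w⊗f_w) = f(v,w)²`) is nondegenerate
on `𝔰_f = span{v⊗f_v}`. -/
theorem stmt6 {F V : Type*} [Field F] [AddCommGroup V] [Module F V]
    (h2 : (2 : F) ≠ 0)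
    (f : V →ₗ[F] V →ₗ[F] F) (halt : ∀ v : V, f v v = 0) (hf : f ≠ 0)
    (g : Module.End F V →ₗ[F] Module.End F V →ₗ[F] F)
    (hg : ∀ a b : V, g (rk1 f a) (rk1 f b) = f a b ^ 2) :
    (∀ v : V, (∀ w : V, f v w = 0) → v = 0) ↔
    (∀ x ∈ Submodule.span F (Set.range (rk1 f)),
      (∀ y ∈ Submodule.span F (Set.range (rk1 f)), g x y = 0) → x = 0) := by
  have hrk1 : ∀ a b : V, rk1 f a b = f a b • a := fun a b => rfl
  constructor
  · -- f nondegenerate → g nondegenerate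
    intro hnd
    have key : ∀ x ∈ Submodule.span F (Set.range (rk1 f)), ∀ b c : V, 2 * f (x b) c =
        g x (rk1 f (b + c)) - g x (rk1 f b) - g x (rk1 f c) := by
      intro x hx
      induction hx using Submodule.span_induction with
      | mem z hz =>
        obtain ⟨a, rfl⟩ := hz
        intro b c
        simp only [hg, hrk1, map_add, map_smul, LinearMap.smul_apply, smul_eq_mul]
        ring
      | zero => intro b c; simp
      | add y z hy hz ihy ihz =>
        intro b c
        simp only [map_add, LinearMap.add_apply]
        linear_combination ihy b c + ihz b c
      | smul c' y hy ih =>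
        intro b c
        simp only [map_smul, LinearMap.smul_apply, smul_eq_mul]
        linear_combination c' * ih b c
    intro x hx hxy
    have hz : ∀ w : V, g x (rk1 f w) = 0 := fun w =>
      hxy _ (Submodule.subset_span ⟨w, rfl⟩)
    have hxb : ∀ b : V, x b = 0 := by
      intro b
      apply hnd
      intro c
      have h2' : 2 * f (x b) c = 0 := by
        rw [key x hx b c, hz, hz, hz]; ring
      rcases mul_eq_zero.mp h2' with h | h
      · exact absurd h h2
      · exact h
    exact LinearMap.ext hxb
  · -- g nondegenerate → f nondegenerate
    intro hnd v hv
    obtain ⟨a, b, hab⟩ : ∃ a b, f a b ≠ 0 := by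
      by_contra h
      push_neg at h
      exact hf (by ext a b; simp [h])
    set x : Module.End F V := rk1 f (a + v) - rk1 f a with hxdef
    have hxmem : x ∈ Submodule.span F (Set.range (rk1 f)) :=
      sub_mem (Submodule.subset_span ⟨a + v, rfl⟩) (Submodule.subset_span ⟨a, rfl⟩)
    have hrad : ∀ y ∈ Submodule.span F (Set.range (rk1 f)), g x y = 0 := by
      intro y hy
      induction hy using Submodule.span_induction with
      | mem z hz =>
        obtain ⟨w, rfl⟩ := hz
        rw [hxdef, map_sub, LinearMap.sub_apply, hg, hg]
        have : f (a + v) w = f a w := by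
          rw [map_add, LinearMap.add_apply, hv w, add_zero]
        rw [this, sub_self]
      | zero => simp
      | add y z hy hz ihy ihz => rw [map_add, ihy, ihz, add_zero]
      | smul c' y hy ih => rw [map_smul, ih, smul_zero]
    have hx0 : x = 0 := hnd x hxmem hrad
    have hxb : x b = f a b • v := by
      rw [hxdef, LinearMap.sub_apply, hrk1, hrk1]
      have : f (a + v) b = f a b := by
        rw [map_add, LinearMap.add_apply, hv b, add_zero]
      rw [this, smul_add, add_sub_cancel_left]
    rw [hx0] at hxb
    have : f a b • v = 0 := by simpa using hxb.symm
    exact (smul_eq_zero.mp this).resolve_left hab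
end

section
/- Let (V,f) be a nondegenerate symplectic space over a field F of characteristic ≠ 2, and let s ∈ fsp(V,f) be nonzero. Then there exists v ∈ V with f(v, s(v)) ≠ 0. -/
/-- If `(V,f)` is a nondegenerate symplectic space over a field of
characteristic ≠ 2 and `s ∈ fsp(V,f)` is nonzero (a finitary linear map with
`f(s v, w) = −f(v, s w)`), then there exists `v ∈ V` with `f(v, s v) ≠ 0`. -/
theorem stmt9 {F V : Type*} [Field F] [AddCommGroup V] [Module F V]
    (h2 : (2 : F) ≠ 0)
    (f : V →ₗ[F] V →ₗ[F] F) (halt : ∀ v : V, f v v = 0)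
    (hnd : ∀ v : V, (∀ w : V, f v w = 0) → v = 0)
    (s : Module.End F V) (hs : s ≠ 0)
    (hfin : FiniteDimensional F (V ⧸ LinearMap.ker s))
    (hsymp : ∀ v w : V, f (s v) w = - f v (s w)) :
    ∃ v : V, f v (s v) ≠ 0 := by
  by_contra h
  push_neg at h
  have hanti : ∀ a b : V, f a b = - f b a := by
    intro a b
    have h1 := halt (a + b)
    simp only [map_add, LinearMap.add_apply, halt] at h1
    linear_combination h1
  have hzero : ∀ v w : V, f w (s v) = 0 := by
    intro v w
    have h1 := h (v + w)
    simp only [map_add, LinearMap.add_apply, h] at h1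
    -- h1 : f v (s w) + f w (s v) = 0
    have h3 : f v (s w) = f w (s v) := by
      rw [hanti v (s w), hsymp w v]; ring
    have : (2 : F) * f w (s v) = 0 := by rw [two_mul]; linear_combination h1 - h3
    rcases mul_eq_zero.mp this with hc | hc
    · exact absurd hc h2
    · exact hc
  apply hs
  ext w
  simp only [LinearMap.zero_apply]
  apply hnd
  intro u
  rw [hanti (s w) u]
  rw [hzero w u]
  ring
end

section
/- Let (V,f) be a nondegenerate symplectic space over a field F of characteristic ≠ 2. Then every extremal element of the Lie algebra 𝔰_f ≅ fsp(V,f) is a nonzero scalar multiple of a pure tensor v ⊗ f_v for some nonzero v ∈ V; equivalently, the extremal elements of fsp(V,f) are exactly its elements of rank 1. -/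
/-- For a nondegenerate symplectic space `(V,f)` over a field of
characteristic ≠ 2, every extremal element of `𝔰_f ≅ fsp(V,f)` is a nonzero scalar
multiple of a pure tensor `v ⊗ f_v` with `v ≠ 0` (i.e. the extremal elements are exactly
the rank-one elements). -/
theorem stmt10 {F V : Type*} [Field F] [AddCommGroup V] [Module F V]
    (h2 : (2 : F) ≠ 0)
    (f : V →ₗ[F] V →ₗ[F] F) (halt : ∀ v : V, f v v = 0)
    (hnd : ∀ v : V, (∀ w : V, f v w = 0) → v = 0)
    (x : Module.End F V) (hxS : x ∈ Submodule.span F (Set.range (rk1 f)))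
    (hx0 : x ≠ 0)
    (hext : ∀ y ∈ Submodule.span F (Set.range (rk1 f)),
      ∃ c : F, ⁅x, ⁅x, y⁆⁆ = c • x) :
    ∃ (lam : F) (v : V), lam ≠ 0 ∧ v ≠ 0 ∧ x = lam • rk1 f v := by
  -- f is skew-symmetric
  have hskew : ∀ u w : V, f u w = - f w u := by
    intro u w
    have h := halt (u + w)
    simp only [map_add, LinearMap.add_apply, halt] at h
    linear_combination h
  -- x is "f-symmetric"
  have hsym : ∀ u w : V, f (x u) w = f (x w) u := by
    let S : Submodule F (Module.End F V) :=
      { carrier := {y | ∀ u w : V, f (y u) w = f (y w) u}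
        add_mem' := by
          intro y z hy hz u w
          simp only [LinearMap.add_apply, map_add]
          rw [hy u w, hz u w]
        zero_mem' := by intro u w; simp
        smul_mem' := by
          intro c y hy u w
          simp only [LinearMap.smul_apply, map_smul, smul_eq_mul]
          rw [hy u w] }
    have hle : Submodule.span F (Set.range (rk1 f)) ≤ S := by
      rw [Submodule.span_le]
      rintro _ ⟨v, rfl⟩ u w
      simp only [rk1, LinearMap.smulRight_apply, map_smul, LinearMap.smul_apply,
        smul_eq_mul]
      ring
    exact hle hxS
  -- the key identity coming from extremality at pure tensors
  have key : ∀ v : V, ∃ c : F, ∀ u : V,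
      c • x u = f v u • x (x v) + (2 * f (x v) u) • x v + f (x (x v)) u • v := by
    intro v
    obtain ⟨c, hc⟩ := hext (rk1 f v) (Submodule.subset_span (Set.mem_range_self v))
    refine ⟨c, fun u => ?_⟩
    have h1 := LinearMap.congr_fun hc u
    simp only [Ring.lie_def, LinearMap.sub_apply, Module.End.mul_apply, rk1,
      LinearMap.smulRight_apply, map_smul, map_sub, LinearMap.smul_apply,
      smul_eq_mul] at h1
    have e1 : f v (x u) = - f (x v) u := by
      rw [hskew v (x u), hsym u v]
    have e2 : f v (x (x u)) = f (x (x v)) u := by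
      rw [hskew v (x (x u)), hsym (x u) v, hskew (x v) (x u), neg_neg, hsym u (x v)]
    rw [e1, e2] at h1
    linear_combination (norm := module) -h1
  -- there is a with f (x a) a ≠ 0
  have hA : ∃ a : V, f (x a) a ≠ 0 := by
    by_contra hcon
    push_neg at hcon
    apply hx0
    ext u
    have hzero : ∀ w : V, f (x u) w = 0 := by
      intro w
      have h1 := hcon (u + w)
      simp only [map_add, LinearMap.add_apply] at h1
      have hs := hsym u w
      have h3 : (2 : F) * f (x u) w = 0 := by
        have hu := hcon u
        have hw := hcon w
        linear_combination h1 + hs - hu - hw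
      exact (mul_eq_zero.mp h3).resolve_left h2
    simpa using hnd (x u) hzero
  obtain ⟨a, ha⟩ := hA
  set b := x a with hbdef
  set d := x b with hddef
  -- ha : f b a ≠ 0
  have hb0 : b ≠ 0 := by
    intro h
    apply ha
    rw [h]
    simp
  have hfda : f d a = 0 := by
    rw [hddef, hbdef, hsym (x a) a]
    exact halt (x a)
  have hfad : f a d = 0 := by rw [hskew a d, hfda, neg_zero]
  obtain ⟨c, hc⟩ := key a
  simp only [← hbdef, ← hddef] at hc
  -- hc : ∀ u, c • x u = f a u • d + (2 * f b u) • b + f d u • a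
  -- determine c
  have hca := hc a
  rw [← hbdef] at hca
  rw [halt a, hfda] at hca
  have hC : (c - 2 * f b a) • b = 0 := by
    linear_combination (norm := module) hca
  have hcval : c = 2 * f b a := by
    rcases smul_eq_zero.mp hC with h | h
    · linear_combination h
    · exact absurd h hb0
  rw [hcval] at hc
  -- the value of x d
  have hcd := hc d
  rw [hfad, halt d] at hcd
  have hE2 : (2 * f b a) • x d = (2 * f b d) • b := by
    linear_combination (norm := module) hcd
  by_cases hd : d = 0
  · -- conclusion: x = (f b a)⁻¹ • rk1 f b
    refine ⟨(f b a)⁻¹, b, inv_ne_zero ha, hb0, ?_⟩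
    ext u
    have hcu := hc u
    rw [hd] at hcu
    simp only [smul_zero, map_zero, LinearMap.zero_apply, zero_smul, add_zero,
      zero_add] at hcu
    have h2g : (2 * f b a) ≠ 0 := mul_ne_zero h2 ha
    have hxu : x u = (2 * f b a)⁻¹ • ((2 * f b u) • b) := by
      rw [← hcu, inv_smul_smul₀ h2g]
    simp only [LinearMap.smul_apply, rk1, LinearMap.smulRight_apply]
    rw [hxu, smul_smul, smul_smul]
    congr 1
    field_simp
  · exfalso
    obtain ⟨c', hc'⟩ := key b
    simp only [← hddef] at hc'
    -- hc' : ∀ u, c' • x u = f b u • x d + (2 * f d u) • d + f (x d) u • b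
    have hfxdb : f (x d) b = 0 := by
      have h5 := congrArg (fun z => f z b) hE2
      simp only [map_smul, LinearMap.smul_apply, smul_eq_mul] at h5
      rw [halt b] at h5
      have h6 : (2 * f b a) * f (x d) b = 0 := by linear_combination h5
      rcases mul_eq_zero.mp h6 with h | h
      · exact absurd h (mul_ne_zero h2 ha)
      · exact h
    -- determine c'
    have hcb' := hc' b
    rw [← hddef] at hcb'
    rw [halt b, hfxdb] at hcb'
    have hC' : (c' - 2 * f d b) • d = 0 := by
      linear_combination (norm := module) hcb'
    have hcv' : c' = 2 * f d b := by
      rcases smul_eq_zero.mp hC' with h | h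
      · linear_combination h
      · exact absurd h hd
    rw [hcv'] at hc'
    -- evaluate hc' at a, multiplied by 2 * f b a, to show f d b = 0
    have hfxda : (2 * f b a) * f (x d) a = (2 * f b d) * f b a := by
      have h5 := congrArg (fun z => f z a) hE2
      simpa only [map_smul, LinearMap.smul_apply, smul_eq_mul] using h5
    have h1 := hc' a
    rw [← hbdef] at h1
    rw [hfda] at h1
    have hfxda_b := congrArg (fun r : F => r • b) hfxda
    have hbd : f b d = - f d b := hskew b d
    have hbd_b := congrArg (fun r : F => ((4 * f b a) * r) • b) hbd
    have hBB : (8 * f b a * f d b) • b = 0 := by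
      linear_combination (norm := module) (2 * f b a) • h1 + (f b a) • hE2
        + hfxda_b + hbd_b
    have hβ0 : f d b = 0 := by
      rcases smul_eq_zero.mp hBB with h | h
      · rcases mul_eq_zero.mp h with h' | h'
        · exfalso
          rcases mul_eq_zero.mp h' with h'' | h''
          · have h8 : (8 : F) = 2 * 2 * 2 := by norm_num
            rw [h8] at h''
            exact (mul_ne_zero (mul_ne_zero h2 h2) h2) h''
          · exact ha h''
        · exact h'
      · exact absurd h hb0
    have hfbd0 : f b d = 0 := by rw [hskew b d, hβ0, neg_zero]
    have hxd0 : x d = 0 := by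
      have hz : (2 * f b a) • x d = 0 := by rw [hE2, hfbd0]; simp
      exact (smul_eq_zero.mp hz).resolve_left (mul_ne_zero h2 ha)
    obtain ⟨u1, hu1⟩ : ∃ u, f d u ≠ 0 := by
      by_contra hcc
      push_neg at hcc
      exact hd (hnd d hcc)
    have h7 := hc' u1
    rw [hβ0, hxd0] at h7
    simp only [mul_zero, zero_smul, smul_zero, map_zero, LinearMap.zero_apply,
      zero_add, add_zero] at h7
    rcases smul_eq_zero.mp h7.symm with h | h
    · rcases mul_eq_zero.mp h with h' | h'
      · exact h2 h'
      · exact hu1 h'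
    · exact hd h
end

section
/- Let 𝔤 be a Lie algebra over a field F of characteristic ≠ 2 with extremal form g satisfying [a,[a,b]] = 2g(a,b)a for extremal a. Let x, y, z be extremal elements with [x,z] = 0, g(x,y) = g(z,y) = 1 and g(x,z) = 0. Then the following bracket relations hold: [y,[x,[y,z]]] = [x,y] − [y,z], [[x,y],[y,z]] = [x,y] + [y,z], [[x,y],[x,[y,z]]] = 2x − [x,[y,z]], and [[y,z],[x,[y,z]]] = [x,[y,z]] − 2z. -/
/-- For extremal elements `x, y, z` of a Lie algebra over `F` (char ≠ 2) with
symmetric associative extremal form `g`, satisfying `⁅x,z⁆ = 0`, `g(x,y) = g(z,y) = 1`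
and `g(x,z) = 0`, the following bracket relations hold:
`⁅y,⁅x,⁅y,z⁆⁆⁆ = ⁅x,y⁆ − ⁅y,z⁆`, `⁅⁅x,y⁆,⁅y,z⁆⁆ = ⁅x,y⁆ + ⁅y,z⁆`,
`⁅⁅x,y⁆,⁅x,⁅y,z⁆⁆⁆ = 2x − ⁅x,⁅y,z⁆⁆`, and `⁅⁅y,z⁆,⁅x,⁅y,z⁆⁆⁆ = ⁅x,⁅y,z⁆⁆ − 2z`. -/
theorem stmt12 {F L : Type*} [Field F] [LieRing L] [LieAlgebra F L]
    (h2 : (2 : F) ≠ 0)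
    (g : L →ₗ[F] L →ₗ[F] F)
    (hsym : ∀ a b : L, g a b = g b a)
    (hassoc : ∀ a b c : L, g ⁅a, b⁆ c = g a ⁅b, c⁆)
    (x y z : L) (hx : x ≠ 0) (hy : y ≠ 0) (hz : z ≠ 0)
    (hxe : ∀ w : L, ⁅x, ⁅x, w⁆⁆ = (2 * g x w) • x)
    (hye : ∀ w : L, ⁅y, ⁅y, w⁆⁆ = (2 * g y w) • y)
    (hze : ∀ w : L, ⁅z, ⁅z, w⁆⁆ = (2 * g z w) • z)
    (hxz : ⁅x, z⁆ = 0) (hgxy : g x y = 1) (hgzy : g z y = 1) (hgxz : g x z = 0) :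
    ⁅y, ⁅x, ⁅y, z⁆⁆⁆ = ⁅x, y⁆ - ⁅y, z⁆ ∧
    ⁅⁅x, y⁆, ⁅y, z⁆⁆ = ⁅x, y⁆ + ⁅y, z⁆ ∧
    ⁅⁅x, y⁆, ⁅x, ⁅y, z⁆⁆⁆ = (2 : F) • x - ⁅x, ⁅y, z⁆⁆ ∧
    ⁅⁅y, z⁆, ⁅x, ⁅y, z⁆⁆⁆ = ⁅x, ⁅y, z⁆⁆ - (2 : F) • z := by

  have hgyz : g y z = 1 := by rw [hsym]; exact hgzy
  have hgyx : g y x = 1 := by rw [hsym]; exact hgxy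
  have hzx : ⁅z, x⁆ = 0 := by rw [← lie_skew, hxz, neg_zero]
  have hgz_xy : g z ⁅x, y⁆ = 0 := by
    have h := hassoc z x y
    rw [hzx] at h
    simpa using h.symm
  have hgx_yz : g x ⁅y, z⁆ = 0 := by
    rw [← hassoc x y z, hsym]; exact hgz_xy
  have hA : ⁅x, ⁅y, z⁆⁆ = ⁅⁅x, y⁆, z⁆ := by
    rw [leibniz_lie x y z, hxz, lie_zero, add_zero]
  have hyyz : ⁅y, ⁅y, z⁆⁆ = (2:F) • y := by rw [hye, hgyz, mul_one]
  have hyxy : ⁅y, ⁅x, y⁆⁆ = -((2:F) • y) := by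
    rw [← lie_skew x y, lie_neg, hye, hgyx, mul_one]
  have key : ⁅y, ⁅x, ⁅y, z⁆⁆⁆ + ⁅y, ⁅x, ⁅y, z⁆⁆⁆
      = (2:F) • ⁅x, y⁆ - (2:F) • ⁅y, z⁆ := by
    have e2 : ⁅⁅x, y⁆, ⁅y, z⁆⁆ = (2:F) • ⁅x, y⁆ - ⁅y, ⁅x, ⁅y, z⁆⁆⁆ := by
      rw [lie_lie, hyyz, lie_smul]
    have e1 : ⁅y, ⁅x, ⁅y, z⁆⁆⁆
        = ⁅⁅y, ⁅x, y⁆⁆, z⁆ + ⁅⁅x, y⁆, ⁅y, z⁆⁆ := by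
      rw [hA]; exact leibniz_lie y ⁅x, y⁆ z
    rw [e2, hyxy, neg_lie, smul_lie] at e1
    linear_combination (norm := abel) e1
  have part1 : ⁅y, ⁅x, ⁅y, z⁆⁆⁆ = ⁅x, y⁆ - ⁅y, z⁆ := by
    apply smul_right_injective L h2
    show (2:F) • _ = (2:F) • _
    rw [two_smul, key, smul_sub]
  have part2 : ⁅⁅x, y⁆, ⁅y, z⁆⁆ = ⁅x, y⁆ + ⁅y, z⁆ := by
    rw [lie_lie, hyyz, lie_smul, part1, two_smul]
    abel
  have part3 : ⁅⁅x, y⁆, ⁅x, ⁅y, z⁆⁆⁆ = (2:F) • x - ⁅x, ⁅y, z⁆⁆ := by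
    rw [lie_lie, hxe, hgx_yz, mul_zero, zero_smul, lie_zero, sub_zero,
      part1, lie_sub, hxe, hgxy, mul_one]
  have part4 : ⁅⁅y, z⁆, ⁅x, ⁅y, z⁆⁆⁆ = ⁅x, ⁅y, z⁆⁆ - (2:F) • z := by
    have hzc : ⁅z, ⁅x, ⁅y, z⁆⁆⁆ = 0 := by
      rw [hA, ← lie_skew ⁅x, y⁆ z, lie_neg, hze, hgz_xy, mul_zero, zero_smul,
        neg_zero]
    have hzyz : ⁅z, ⁅y, z⁆⁆ = -((2:F) • z) := by
      rw [← lie_skew y z, lie_neg, hze, hgzy, mul_one]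
    rw [lie_lie, hzc, lie_zero, part1, lie_sub, hzyz, ← lie_skew z ⁅x, y⁆,
      ← hA]
    abel
  exact ⟨part1, part2, part3, part4⟩
end

section
/- Let 𝔤 be a Lie algebra over a field F of characteristic ≠ 2, and let (x,y,z) be a symplectic triple of pure extremal elements (i.e., [x,y] ≠ 0 ≠ [y,z], [x,z] = 0, and z ∉ ⟨x,y⟩). Then the subalgebra generated by x, y, z is linearly spanned by the six elements x, y, z, [x,y], [y,z], [x,[y,z]]; in particular it has dimension at most 6. -/
/-- Premet-type identity for an extremal element `y` (char ≠ 2). -/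
lemma premet_aux {F L : Type*} [Field F] [LieRing L] [LieAlgebra F L]
    (h2 : (2 : F) ≠ 0) (gy : L →ₗ[F] F) (y : L)
    (hye : ∀ w : L, ⁅y, ⁅y, w⁆⁆ = (2 * gy w) • y) (u v : L) :
    ⁅y, ⁅u, ⁅y, v⁆⁆⁆ = (gy ⁅u, v⁆) • y - (gy u) • ⁅y, v⁆ - (gy v) • ⁅y, u⁆ := by
  have skew : ∀ p q : L, ⁅p, q⁆ = -⁅q, p⁆ := fun p q => (lie_skew p q).symm
  have e1 : ⁅y, ⁅u, ⁅y, v⁆⁆⁆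
      = ⁅y, ⁅⁅u, y⁆, v⁆⁆ + (2 * gy ⁅u, v⁆) • y := by
    conv_lhs => rw [leibniz_lie u y v]
    rw [lie_add, hye]
  have e2 : ⁅y, ⁅u, y⁆⁆ = -((2 * gy u) • y) := by
    rw [skew u y, lie_neg, hye u]
  have e3 : ⁅⁅u, y⁆, ⁅y, v⁆⁆
      = -⁅y, ⁅u, ⁅y, v⁆⁆⁆ - (2 * gy v) • ⁅y, u⁆ := by
    rw [skew u y, neg_lie, lie_lie, hye v, lie_smul, skew u y]
    module
  have e4 : ⁅y, ⁅⁅u, y⁆, v⁆⁆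
      = -((2 * gy u) • ⁅y, v⁆) + (-⁅y, ⁅u, ⁅y, v⁆⁆⁆ - (2 * gy v) • ⁅y, u⁆) := by
    rw [leibniz_lie y ⁅u, y⁆ v, e2, e3, neg_lie, smul_lie]
  have comb : ⁅y, ⁅u, ⁅y, v⁆⁆⁆
      = -((2 * gy u) • ⁅y, v⁆) + (-⁅y, ⁅u, ⁅y, v⁆⁆⁆ - (2 * gy v) • ⁅y, u⁆)
        + (2 * gy ⁅u, v⁆) • y := by
    conv_lhs => rw [e1, e4]
  have key : (2 : F) • ⁅y, ⁅u, ⁅y, v⁆⁆⁆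
      = (2 : F) • ((gy ⁅u, v⁆) • y - (gy u) • ⁅y, v⁆ - (gy v) • ⁅y, u⁆) := by
    rw [two_smul, two_smul]
    nth_rewrite 1 [comb]
    module
  exact smul_right_injective L h2 key

/-- Let `(x,y,z)` be a symplectic triple of pure extremal elements of a Lie
algebra `𝔤` over `F` (char ≠ 2): `⁅x,y⁆ ≠ 0 ≠ ⁅y,z⁆`, `⁅x,z⁆ = 0` and `z ∉ ⟨x,y⟩`
(where, by assumption, noncommuting extremal pairs generate an `sl₂`, i.e. `g(x,y) ≠ 0`
and `g(y,z) ≠ 0`). Then the subalgebra generated by `x, y, z` is linearly spanned by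
`x, y, z, ⁅x,y⁆, ⁅y,z⁆, ⁅x,⁅y,z⁆⁆`; in particular it has dimension at most 6. -/
theorem stmt13 {F L : Type*} [Field F] [LieRing L] [LieAlgebra F L]
    (h2 : (2 : F) ≠ 0)
    (g : L →ₗ[F] L →ₗ[F] F)
    (hsym : ∀ a b : L, g a b = g b a)
    (hassoc : ∀ a b c : L, g ⁅a, b⁆ c = g a ⁅b, c⁆)
    (x y z : L) (hx : x ≠ 0) (hy : y ≠ 0) (hz : z ≠ 0)
    (hxe : ∀ w : L, ⁅x, ⁅x, w⁆⁆ = (2 * g x w) • x)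
    (hye : ∀ w : L, ⁅y, ⁅y, w⁆⁆ = (2 * g y w) • y)
    (hze : ∀ w : L, ⁅z, ⁅z, w⁆⁆ = (2 * g z w) • z)
    (hxy : ⁅x, y⁆ ≠ 0) (hyz : ⁅y, z⁆ ≠ 0) (hxz : ⁅x, z⁆ = 0)
    (hgxy : g x y ≠ 0) (hgyz : g y z ≠ 0)
    (hznot : z ∉ LieSubalgebra.lieSpan F L {x, y}) :
    LieSubalgebra.toSubmodule (LieSubalgebra.lieSpan F L {x, y, z})
      = Submodule.span F {x, y, z, ⁅x, y⁆, ⁅y, z⁆, ⁅x, ⁅y, z⁆⁆} ∧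
    Module.finrank F (LieSubalgebra.lieSpan F L {x, y, z}) ≤ 6 := by
  classical
  have skew : ∀ p q : L, ⁅p, q⁆ = -⁅q, p⁆ := fun p q => (lie_skew p q).symm
  set a : L := ⁅x, y⁆ with ha
  set b : L := ⁅y, z⁆ with hb
  set c : L := ⁅x, b⁆ with hc
  set V : Submodule F L := Submodule.span F ({x, y, z, a, b, c} : Set L) with hV
  have hc' : c = ⁅x, ⁅y, z⁆⁆ := by rw [hc, hb]
  -- basic bracket facts
  have hzx0 : ⁅z, x⁆ = 0 := by rw [skew z x, hxz, neg_zero]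
  -- the bracket table
  have exa : ⁅x, a⁆ = (2 * g x y) • x := hxe y
  have eya : ⁅y, a⁆ = -((2 * g x y) • y) := by
    rw [ha, skew x y, lie_neg, hye x, hsym y x]
  have eza : ⁅z, a⁆ = -c := by
    rw [ha, leibniz_lie z x y, hzx0, zero_lie, zero_add, skew z y, lie_neg, ← hb, ← hc]
  have exb : ⁅x, b⁆ = c := hc.symm
  have eyb : ⁅y, b⁆ = (2 * g y z) • y := hye z
  have ezb : ⁅z, b⁆ = -((2 * g y z) • z) := by
    rw [hb, skew y z, lie_neg, hze y, hsym z y]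
  have exc : ⁅x, c⁆ = 0 := by
    have h1 : ⁅x, ⁅x, b⁆⁆ = (2 * g x b) • x := hxe b
    have h6 : g ⁅x, y⁆ z = 0 := by
      rw [skew x y, map_neg, LinearMap.neg_apply, hassoc y x z, hxz, map_zero, neg_zero]
    have h4 : g x b = 0 := by rw [hb, ← hassoc x y z, h6]
    rw [← hc, h4, mul_zero, zero_smul] at h1
    exact h1
  have eyc : ⁅y, c⁆ = (g y z) • a - (g x y) • b := by
    have h1 := premet_aux h2 (g y) y hye x z
    rw [hc', h1, hxz, map_zero, zero_smul, zero_sub, hsym y x, skew y x, ← ha, ← hb]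
    module
  have ezc : ⁅z, c⁆ = 0 := by
    rw [hc, leibniz_lie z x b, hzx0, zero_lie, zero_add, ezb, lie_neg, lie_smul, hxz,
      smul_zero, neg_zero]
  have eab : ⁅a, b⁆ = (g y z) • a + (g x y) • b := by
    rw [ha, lie_lie, eyb, exb, eyc, lie_smul, ← ha]
    module
  have eac : ⁅a, c⁆ = (2 * g x y * g y z) • x - (g x y) • c := by
    rw [ha, lie_lie, exc, lie_zero, eyc, lie_sub, lie_smul, lie_smul, exa, exb]
    module
  have ebc : ⁅b, c⁆ = (g y z) • c - (2 * g x y * g y z) • z := by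
    rw [hb, lie_lie, ezc, lie_zero, eyc, lie_sub, lie_smul, lie_smul, eza, ezb]
    module
  -- membership of the six generators in V
  have hxV : x ∈ V := Submodule.subset_span (by simp)
  have hyV : y ∈ V := Submodule.subset_span (by simp)
  have hzV : z ∈ V := Submodule.subset_span (by simp)
  have haV : a ∈ V := Submodule.subset_span (by simp)
  have hbV : b ∈ V := Submodule.subset_span (by simp)
  have hcV : c ∈ V := Submodule.subset_span (by simp)
  -- brackets of generators lie in V
  have hcl : ∀ p q : L, p ∈ ({x, y, z, a, b, c} : Set L) →
      q ∈ ({x, y, z, a, b, c} : Set L) → ⁅p, q⁆ ∈ V := by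
    have m_xy : ⁅x, y⁆ ∈ V := by rw [← ha]; exact haV
    have m_xz : ⁅x, z⁆ ∈ V := by rw [hxz]; exact V.zero_mem
    have m_xa : ⁅x, a⁆ ∈ V := by rw [exa]; exact V.smul_mem _ hxV
    have m_xb : ⁅x, b⁆ ∈ V := by rw [← hc]; exact hcV
    have m_xc : ⁅x, c⁆ ∈ V := by rw [exc]; exact V.zero_mem
    have m_yz : ⁅y, z⁆ ∈ V := by rw [← hb]; exact hbV
    have m_ya : ⁅y, a⁆ ∈ V := by rw [eya]; exact V.neg_mem (V.smul_mem _ hyV)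
    have m_yb : ⁅y, b⁆ ∈ V := by rw [eyb]; exact V.smul_mem _ hyV
    have m_yc : ⁅y, c⁆ ∈ V := by
      rw [eyc]; exact V.sub_mem (V.smul_mem _ haV) (V.smul_mem _ hbV)
    have m_za : ⁅z, a⁆ ∈ V := by rw [eza]; exact V.neg_mem hcV
    have m_zb : ⁅z, b⁆ ∈ V := by rw [ezb]; exact V.neg_mem (V.smul_mem _ hzV)
    have m_zc : ⁅z, c⁆ ∈ V := by rw [ezc]; exact V.zero_mem
    have m_ab : ⁅a, b⁆ ∈ V := by
      rw [eab]; exact V.add_mem (V.smul_mem _ haV) (V.smul_mem _ hbV)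
    have m_ac : ⁅a, c⁆ ∈ V := by
      rw [eac]; exact V.sub_mem (V.smul_mem _ hxV) (V.smul_mem _ hcV)
    have m_bc : ⁅b, c⁆ ∈ V := by
      rw [ebc]; exact V.sub_mem (V.smul_mem _ hcV) (V.smul_mem _ hzV)
    intro p q hp hq
    simp only [Set.mem_insert_iff, Set.mem_singleton_iff] at hp hq
    rcases hp with rfl | rfl | rfl | rfl | rfl | rfl <;>
      rcases hq with rfl | rfl | rfl | rfl | rfl | rfl <;>
      first
        | (rw [lie_self]; exact V.zero_mem)
        | assumption
        | (rw [← lie_skew]; exact V.neg_mem (by assumption))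
  -- V is closed under the bracket
  have hclosed : ∀ u ∈ V, ∀ v ∈ V, ⁅u, v⁆ ∈ V := by
    intro u hu v hv
    induction hu, hv using Submodule.span_induction₂ with
    | mem_mem p q hp hq => exact hcl p q hp hq
    | zero_left q hq => rw [zero_lie]; exact V.zero_mem
    | zero_right p hp => rw [lie_zero]; exact V.zero_mem
    | add_left p q r hp hq hr h1 h2 => rw [add_lie]; exact V.add_mem h1 h2
    | add_right p q r hp hq hr h1 h2 => rw [lie_add]; exact V.add_mem h1 h2
    | smul_left t p q hp hq h1 => rw [smul_lie]; exact V.smul_mem t h1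
    | smul_right t p q hp hq h1 => rw [lie_smul]; exact V.smul_mem t h1
  let K : LieSubalgebra F L :=
    { V with lie_mem' := fun {u v} hu hv => hclosed u hu v hv }
  have hle : LieSubalgebra.lieSpan F L {x, y, z} ≤ K := by
    rw [LieSubalgebra.lieSpan_le]
    intro w hw
    simp only [Set.mem_insert_iff, Set.mem_singleton_iff] at hw
    rcases hw with rfl | rfl | rfl
    · exact hxV
    · exact hyV
    · exact hzV
  have hxS : x ∈ LieSubalgebra.lieSpan F L {x, y, z} :=
    LieSubalgebra.subset_lieSpan (by simp)
  have hyS : y ∈ LieSubalgebra.lieSpan F L {x, y, z} :=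
    LieSubalgebra.subset_lieSpan (by simp)
  have hzS : z ∈ LieSubalgebra.lieSpan F L {x, y, z} :=
    LieSubalgebra.subset_lieSpan (by simp)
  have haS : a ∈ LieSubalgebra.lieSpan F L {x, y, z} :=
    (LieSubalgebra.lieSpan F L {x, y, z}).lie_mem hxS hyS
  have hbS : b ∈ LieSubalgebra.lieSpan F L {x, y, z} :=
    (LieSubalgebra.lieSpan F L {x, y, z}).lie_mem hyS hzS
  have hcS : c ∈ LieSubalgebra.lieSpan F L {x, y, z} :=
    (LieSubalgebra.lieSpan F L {x, y, z}).lie_mem hxS hbS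
  have heq : LieSubalgebra.toSubmodule (LieSubalgebra.lieSpan F L {x, y, z}) = V := by
    apply le_antisymm
    · intro w hw
      exact hle hw
    · rw [hV, Submodule.span_le]
      intro w hw
      simp only [Set.mem_insert_iff, Set.mem_singleton_iff] at hw
      rcases hw with rfl | rfl | rfl | rfl | rfl | rfl
      · exact hxS
      · exact hyS
      · exact hzS
      · exact haS
      · exact hbS
      · exact hcS
  constructor
  · exact heq
  · have h6 : ({x, y, z, a, b, c} : Set L) = Set.range ![x, y, z, a, b, c] := by
      simp only [Matrix.range_cons, Matrix.range_empty]
      ext w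
      simp only [Set.mem_insert_iff, Set.mem_singleton_iff, Set.union_empty, Set.mem_union,
        Set.mem_empty_iff_false, or_false]
    have hfr : Module.finrank F (LieSubalgebra.lieSpan F L {x, y, z})
        = Module.finrank F V := by
      have h7 : Module.finrank F (LieSubalgebra.toSubmodule
          (LieSubalgebra.lieSpan F L {x, y, z})) = Module.finrank F V := by rw [heq]
      exact h7
    rw [hfr, hV, h6]
    have h8 := finrank_range_le_card (R := F) ![x, y, z, a, b, c]
    simpa [Set.finrank] using h8
end

section
/- Let 𝔤 be a Lie algebra over a field F of characteristic ≠ 2 with extremal form g, and let x, y be extremal elements with g(x,y) = 1. Suppose [·,·]₁ is a second Lie bracket on the underlying vector space of 𝔤 such that x and y are also extremal for [·,·]₁ with extremal form g₁, the subalgebras ⟨x,y⟩ and ⟨x,y⟩₁ are equal as 3-dimensional subspaces with basis x, y, [x,y], and the sets of extremal elements of these two sl₂'s coincide. Then [x,y]₁ = γ[x,y] for some nonzero scalar γ ∈ F. -/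
/-- Let `x, y` be extremal elements of a Lie algebra `𝔤` over `F`
(char ≠ 2) with `g(x,y) = 1`, and let `β = [·,·]₁` be a second Lie bracket on the
underlying vector space for which `x, y` are also extremal with extremal form `g₁`.
If the subalgebras `⟨x,y⟩` and `⟨x,y⟩₁` coincide as the 3-dimensional subspace with
basis `x, y, ⁅x,y⁆`, and the sets of extremal elements of the two `sl₂`'s coincide
(each given by the conic `{a•x + b•y + c•⁅x,y⁆ : ab = c²}`, resp.
`{(a g₁(x,y))•x + b•y + c•β(x,y) : ab = c²}`), then `β(x,y) = γ•⁅x,y⁆` for some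
nonzero scalar `γ`. -/
theorem stmt15 {F L : Type*} [Field F] [LieRing L] [LieAlgebra F L]
    (h2 : (2 : F) ≠ 0)
    (g g₁ : L →ₗ[F] L →ₗ[F] F)
    (β : L →ₗ[F] L →ₗ[F] L)
    (hβalt : ∀ a : L, β a a = 0)
    (hβjac : ∀ a b c : L, β a (β b c) = β (β a b) c + β b (β a c))
    (x y : L) (hx : x ≠ 0) (hy : y ≠ 0)
    (hxe : ∀ w : L, ⁅x, ⁅x, w⁆⁆ = (2 * g x w) • x)
    (hye : ∀ w : L, ⁅y, ⁅y, w⁆⁆ = (2 * g y w) • y)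
    (hgxy : g x y = 1)
    (hxe₁ : ∀ w : L, β x (β x w) = (2 * g₁ x w) • x)
    (hye₁ : ∀ w : L, β y (β y w) = (2 * g₁ y w) • y)
    (hg₁xy : g₁ x y ≠ 0)
    (hli : LinearIndependent F ![x, y, ⁅x, y⁆])
    (hspan : Submodule.span F {x, y, ⁅x, y⁆} = Submodule.span F {x, y, β x y})
    (hconic : {v : L | ∃ a b c : F, a * b = c ^ 2 ∧ v = a • x + b • y + c • ⁅x, y⁆}
      = {v : L | ∃ a b c : F, a * b = c ^ 2 ∧
          v = (a * g₁ x y) • x + b • y + c • β x y}) :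
    ∃ γ : F, γ ≠ 0 ∧ β x y = γ • ⁅x, y⁆ := by
  have hind : ∀ a b c : F, a • x + b • y + c • ⁅x, y⁆ = 0 → a = 0 ∧ b = 0 ∧ c = 0 := by
    intro a b c h
    have h3 := Fintype.linearIndependent_iff.mp hli ![a, b, c] (by
      simpa [Fin.sum_univ_three] using h)
    exact ⟨h3 0, h3 1, h3 2⟩
  have huniq : ∀ a b c a' b' c' : F,
      a • x + b • y + c • ⁅x, y⁆ = a' • x + b' • y + c' • ⁅x, y⁆ →
      a = a' ∧ b = b' ∧ c = c' := by
    intro a b c a' b' c' h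
    have h0 : (a - a') • x + (b - b') • y + (c - c') • ⁅x, y⁆ = 0 := by
      have hs := sub_eq_zero.mpr h
      rw [← hs]; module
    obtain ⟨h1, h2', h3⟩ := hind _ _ _ h0
    exact ⟨sub_eq_zero.mp h1, sub_eq_zero.mp h2', sub_eq_zero.mp h3⟩
  -- decompose β x y in the basis
  have hmem : β x y ∈ Submodule.span F ({x, y, ⁅x, y⁆} : Set L) := by
    rw [hspan]; exact Submodule.subset_span (by simp)
  rw [Submodule.mem_span_insert] at hmem
  obtain ⟨p, w, hw, hβw⟩ := hmem
  rw [Submodule.mem_span_insert] at hw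
  obtain ⟨q, w', hw', hww⟩ := hw
  rw [Submodule.mem_span_singleton] at hw'
  obtain ⟨r, hr⟩ := hw'
  have hβ : β x y = p • x + q • y + r • ⁅x, y⁆ := by
    rw [hβw, hww, ← hr]; abel
  -- r ≠ 0
  have hr0 : r ≠ 0 := by
    intro h0
    have hle : Submodule.span F ({x, y, β x y} : Set L) ≤
        Submodule.span F ({x, y} : Set L) := by
      rw [Submodule.span_le]
      intro v hv
      simp only [Set.mem_insert_iff, Set.mem_singleton_iff] at hv
      rcases hv with rfl | rfl | rfl
      · exact Submodule.subset_span (by simp)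
      · exact Submodule.subset_span (by simp)
      · rw [hβ, h0, zero_smul, add_zero]
        exact Submodule.add_mem _
          (Submodule.smul_mem _ _ (Submodule.subset_span (by simp)))
          (Submodule.smul_mem _ _ (Submodule.subset_span (by simp)))
    have hz : ⁅x, y⁆ ∈ Submodule.span F ({x, y} : Set L) := by
      apply hle
      rw [← hspan]
      exact Submodule.subset_span (by simp)
    rw [Submodule.mem_span_pair] at hz
    obtain ⟨s, t, hst⟩ := hz
    have := hind s t (-1) (by rw [hst]; module)
    exact absurd this.2.2 (by norm_num)
  -- direction 1: conic points of second bracket expressed in first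
  have dir1 : ∀ s : F, s ^ 2 = 1 → (g₁ x y + s * p) * (1 + s * q) = r ^ 2 := by
    intro s hs
    have hvmem : ((1 : F) * g₁ x y) • x + (1 : F) • y + s • β x y ∈
        {v : L | ∃ a b c : F, a * b = c ^ 2 ∧
          v = (a * g₁ x y) • x + b • y + c • β x y} := ⟨1, 1, s, by simp [hs], rfl⟩
    rw [← hconic] at hvmem
    obtain ⟨a, b, c, hab, hv⟩ := hvmem
    have hv' : (g₁ x y + s * p) • x + (1 + s * q) • y + (s * r) • ⁅x, y⁆ =
        a • x + b • y + c • ⁅x, y⁆ := by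
      rw [← hv, hβ]; module
    obtain ⟨ha, hb, hc⟩ := huniq _ _ _ _ _ _ hv'
    linear_combination (1 + s*q)*ha + a*hb + hab - (c + s*r)*hc + r^2*hs
  -- direction 2
  have dir2 : ∀ s : F, s ^ 2 = 1 → ∃ c : F, c * r = s ∧
      (1 - c * p) * (1 - c * q) = c ^ 2 * g₁ x y := by
    intro s hs
    have hvmem : (1 : F) • x + (1 : F) • y + s • ⁅x, y⁆ ∈
        {v : L | ∃ a b c : F, a * b = c ^ 2 ∧
          v = a • x + b • y + c • ⁅x, y⁆} := ⟨1, 1, s, by simp [hs], rfl⟩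
    rw [hconic] at hvmem
    obtain ⟨a, b, c, hab, hv⟩ := hvmem
    have hv' : (1 : F) • x + (1 : F) • y + s • ⁅x, y⁆ =
        (a * g₁ x y + c * p) • x + (b + c * q) • y + (c * r) • ⁅x, y⁆ := by
      rw [hv, hβ]; module
    obtain ⟨ha, hb, hc⟩ := huniq _ _ _ _ _ _ hv'
    exact ⟨c, hc.symm, by linear_combination (1 - c*q)*ha + a*(g₁ x y)*hb + (g₁ x y)*hab⟩
  have E1 := dir1 1 (by norm_num)
  have E2 := dir1 (-1) (by norm_num)
  obtain ⟨c₁, hc₁, E3⟩ := dir2 1 (by norm_num)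
  obtain ⟨c₂, hc₂, E4⟩ := dir2 (-1) (by norm_num)
  have hcc : c₂ = -c₁ := by
    have : (c₂ + c₁) * r = 0 := by linear_combination hc₂ + hc₁
    exact eq_neg_of_add_eq_zero_left ((mul_eq_zero.mp this).resolve_right hr0)
  subst hcc
  have hc₁0 : c₁ ≠ 0 := by
    intro h0; rw [h0, zero_mul] at hc₁; exact one_ne_zero hc₁.symm
  have hr2 : c₁ ^ 2 * r ^ 2 = 1 := by linear_combination (c₁ * r + 1) * hc₁
  -- G + p*q = r^2
  have hA : (2 : F) * (g₁ x y + p * q - r ^ 2) = 0 := by linear_combination E1 + E2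
  have hGpq : g₁ x y + p * q = r ^ 2 := by
    have := (mul_eq_zero.mp hA).resolve_left h2
    linear_combination this
  -- r^2 + p*q = G
  have hC : (2 : F) * (r ^ 2 + p * q - g₁ x y) = 0 := by
    linear_combination r ^ 2 * E3 + r ^ 2 * E4 + (2 * g₁ x y - 2 * p * q) * hr2
  have hRG : r ^ 2 + p * q = g₁ x y := by
    have := (mul_eq_zero.mp hC).resolve_left h2
    linear_combination this
  -- p*q = 0
  have hpq : p * q = 0 := by
    have h0 : (2 : F) * (p * q) = 0 := by linear_combination hGpq + hRG
    exact (mul_eq_zero.mp h0).resolve_left h2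
  -- p + q = 0
  have hsum : p + q = 0 := by
    have h0 : (2 : F) * (c₁ * (p + q)) = 0 := by linear_combination E4 - E3
    have h1 := (mul_eq_zero.mp h0).resolve_left h2
    exact (mul_eq_zero.mp h1).resolve_left hc₁0
  have hp0 : p = 0 := by
    have hq : q = -p := eq_neg_of_add_eq_zero_right hsum
    rw [hq] at hpq
    have : p * p = 0 := by linear_combination -hpq
    exact mul_self_eq_zero.mp this
  have hq0 : q = 0 := by
    have := hsum; rw [hp0, zero_add] at this; exact this
  exact ⟨r, hr0, by rw [hβ, hp0, hq0, zero_smul, zero_smul, zero_add, zero_add]⟩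
end

section
/- Let 𝔤 be a Lie algebra over a field F of characteristic ≠ 2 and x, y extremal elements with extremal form value g(x,y) ≠ 0. Then the set of extremal points of 𝔤 contained in the subalgebra ⟨x,y⟩ ≅ sl₂(F) forms a conic in the projective plane on ⟨x,y⟩: with respect to the basis (g(x,y)x, y, [x,y]), a 1-space spanned by αg(x,y)x + βy + γ[x,y] consists of extremal elements if and only if αβ = γ². In particular, every projective line of this plane meets the set of extremal points in at most two points. -/
/-!
Put `h = ⁅x, y⁆` and `λ = g x y`. Jacobi applied to `h` gives `g y x = λ`, so `⁅x, h⁆ = 2λ x`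
and `⁅y, h⁆ = -2λ y`; applying `ad x` twice shows that `x, y, h` are independent. For
`z = a x + b y + c h` one computes `⁅z, ⁅z, x⁆⁆ = 2λb z + 4λ(λc² - ab) x`, so extremality of `z`
forces `ab = λc²`. Conversely, if `ab = λc²` and `a ≠ 0` then `z = a • exp (t ad y) x` with
`t = -c/a`, and `exp (t ad y)` is a Lie automorphism by Premet's identity, so `z` is extremal.
Finally, if three extremal points lie on a line, the quadratic form `ab - λc²` vanishes on a plane
of coordinates, which forces the coordinates of two of the points to be proportional.
-/

section ExtremalElements

variable {F L : Type*} [Field F] [LieRing L] [LieAlgebra F L]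

variable (F) in
def IsExtremal (z : L) : Prop := ∀ w : L, ∃ c : F, ⁅z, ⁅z, w⁆⁆ = c • z

def IsExtremalWith (g : L →ₗ[F] L →ₗ[F] F) (y : L) : Prop :=
  ∀ w : L, ⁅y, ⁅y, w⁆⁆ = (2 * g y w) • y

namespace IsExtremal

theorem smul {z : L} (hz : IsExtremal F z) (a : F) : IsExtremal F (a • z) := by
  intro w
  obtain ⟨c, hc⟩ := hz w
  exact ⟨a * c, by simp only [smul_lie, lie_smul, hc]; module⟩

theorem map {L' : Type*} [LieRing L'] [LieAlgebra F L'] {z : L} (hz : IsExtremal F z)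
    (f : L →ₗ⁅F⁆ L') (hf : Function.Surjective f) : IsExtremal F (f z) := by
  intro w
  obtain ⟨v, rfl⟩ := hf w
  obtain ⟨c, hc⟩ := hz v
  exact ⟨c, by rw [← LieHom.map_lie, ← LieHom.map_lie, hc, map_smul]⟩

end IsExtremal

namespace IsExtremalWith

variable {g : L →ₗ[F] L →ₗ[F] F} {y : L}

theorem isExtremal (hy : IsExtremalWith g y) : IsExtremal F y := fun w => ⟨_, hy w⟩

theorem premet (h2 : (2 : F) ≠ 0) (hy : IsExtremalWith g y) (u v : L) :
    ⁅⁅y, u⁆, ⁅y, v⁆⁆ = g y ⁅u, v⁆ • y - g y u • ⁅y, v⁆ + g y v • ⁅y, u⁆ := by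
  have h := hy ⁅u, v⁆
  rw [leibniz_lie y u v, lie_add, leibniz_lie y ⁅y, u⁆ v, leibniz_lie y u ⁅y, v⁆, hy u, hy v,
    smul_lie, lie_smul, ← lie_skew u y] at h
  refine smul_right_injective L h2 ?_
  linear_combination (norm := module) h

theorem apply_self (h2 : (2 : F) ≠ 0) (hy : IsExtremalWith g y) (hy0 : y ≠ 0) : g y y = 0 := by
  have h := hy y
  rw [lie_self, lie_zero, eq_comm, smul_eq_zero] at h
  simpa [h2, hy0] using h

theorem apply_lie_self (h2 : (2 : F) ≠ 0) (hy : IsExtremalWith g y) (hy0 : y ≠ 0) (w : L) :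
    g y ⁅y, w⁆ = 0 := by
  have h := hy ⁅y, w⁆
  rw [hy w, lie_smul, lie_self, smul_zero, eq_comm, smul_eq_zero] at h
  simpa [h2, hy0] using h

end IsExtremalWith

variable (g : L →ₗ[F] L →ₗ[F] F) (y : L) in
/-- `exp (t ad y)`: the series stops after the quadratic term because
`(ad y)^2 = 2 g y (·) • y`. -/
def extremalExp (t : F) : L →ₗ[F] L where
  toFun u := u + t • ⁅y, u⁆ + (t ^ 2 * g y u) • y
  map_add' u v := by simp only [lie_add, map_add]; module
  map_smul' a u := by simp only [lie_smul, map_smul, smul_eq_mul, RingHom.id_apply]; module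

section extremalExp

variable {g : L →ₗ[F] L →ₗ[F] F} {y : L}

@[simp]
theorem extremalExp_apply (t : F) (u : L) :
    extremalExp g y t u = u + t • ⁅y, u⁆ + (t ^ 2 * g y u) • y := rfl

theorem extremalExp_lie (h2 : (2 : F) ≠ 0) (hy : IsExtremalWith g y) (t : F) (u v : L) :
    extremalExp g y t ⁅u, v⁆ = ⁅extremalExp g y t u, extremalExp g y t v⁆ := by
  have hyuy : ⁅⁅y, u⁆, y⁆ = -((2 * g y u) • y) := by rw [← lie_skew, hy u]
  simp only [extremalExp_apply, add_lie, lie_add, smul_lie, lie_smul, lie_self, smul_zero,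
    add_zero]
  rw [hy.premet h2, hy v, hyuy, ← lie_skew u y, leibniz_lie y u v]
  module

theorem extremalExp_extremalExp_neg (h2 : (2 : F) ≠ 0) (hy : IsExtremalWith g y) (hy0 : y ≠ 0)
    (t : F) (w : L) : extremalExp g y t (extremalExp g y (-t) w) = w := by
  simp only [extremalExp_apply, lie_self, hy w, map_add, map_smul,
    hy.apply_self h2 hy0, hy.apply_lie_self h2 hy0]
  module

theorem extremalExp_surjective (h2 : (2 : F) ≠ 0) (hy : IsExtremalWith g y) (hy0 : y ≠ 0) (t : F) :
    Function.Surjective (extremalExp g y t) :=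
  fun w => ⟨_, extremalExp_extremalExp_neg h2 hy hy0 t w⟩

theorem IsExtremal.extremalExp {x : L} (hx : IsExtremal F x)
    (h2 : (2 : F) ≠ 0) (hy : IsExtremalWith g y) (hy0 : y ≠ 0) (t : F) :
    IsExtremal F (extremalExp g y t x) :=
  hx.map { _root_.extremalExp g y t with map_lie' := extremalExp_lie h2 hy t _ _ }
    (extremalExp_surjective h2 hy hy0 t)

end extremalExp

namespace IsExtremalWith

variable {g : L →ₗ[F] L →ₗ[F] F} {x y : L}

theorem lie_ne_zero (h2 : (2 : F) ≠ 0) (hx : IsExtremalWith g x) (hg : g x y ≠ 0) :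
    ⁅x, y⁆ ≠ 0 := by
  intro h
  have hxy := hx y
  rw [h, lie_zero, eq_comm, smul_eq_zero] at hxy
  rcases hxy with h | rfl
  · exact mul_ne_zero h2 hg h
  · simp at hg

theorem apply_comm (h2 : (2 : F) ≠ 0) (hx : IsExtremalWith g x) (hy : IsExtremalWith g y)
    (hg : g x y ≠ 0) : g y x = g x y := by
  have hhx : ⁅⁅x, y⁆, x⁆ = -((2 * g x y) • x) := by rw [← lie_skew, hx y]
  have hhy : ⁅⁅x, y⁆, y⁆ = (2 * g y x) • y := by
    rw [← lie_skew, ← lie_skew x y, lie_neg, hy x, neg_neg]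
  have h := leibniz_lie ⁅x, y⁆ x y
  rw [lie_self, hhx, hhy, neg_lie, smul_lie, lie_smul] at h
  have h' : (2 * (g y x - g x y)) • ⁅x, y⁆ = 0 := by linear_combination (norm := module) -h
  simpa [h2, hx.lie_ne_zero h2 hg, sub_eq_zero] using h'

end IsExtremalWith

section Plane

variable {g : L →ₗ[F] L →ₗ[F] F} {x y : L}

theorem eq_zero_of_smul_add_smul_add_smul_lie_eq_zero (h2 : (2 : F) ≠ 0)
    (hx : IsExtremalWith g x) (hg : g x y ≠ 0) {a b c : F}
    (h : a • x + b • y + c • ⁅x, y⁆ = 0) : a = 0 ∧ b = 0 ∧ c = 0 := by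
  have hx0 : x ≠ 0 := by rintro rfl; simp at hg
  have hl : 2 * g x y ≠ 0 := mul_ne_zero h2 hg
  have h1 : b • ⁅x, y⁆ + (c * (2 * g x y)) • x = 0 := by
    have := congrArg (⁅x, ·⁆) h
    simp only [lie_add, lie_smul, lie_self, hx y, lie_zero] at this
    linear_combination (norm := module) this
  have hb : b = 0 := by
    have := congrArg (⁅x, ·⁆) h1
    simp only [lie_add, lie_smul, lie_self, hx y, lie_zero, smul_zero, add_zero,
      smul_smul] at this
    simpa [hl, hx0] using this
  have hc : c = 0 := by simpa [hb, hl, hx0] using h1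
  exact ⟨by simpa [hb, hc, hx0] using h, hb, hc⟩

theorem lie_lie_smul_add_smul_add_smul_lie (h2 : (2 : F) ≠ 0) (hx : IsExtremalWith g x)
    (hy : IsExtremalWith g y) (hg : g x y ≠ 0) (a b c : F) :
    ⁅a • x + b • y + c • ⁅x, y⁆, ⁅a • x + b • y + c • ⁅x, y⁆, x⁆⁆ =
      (2 * g x y * b) • (a • x + b • y + c • ⁅x, y⁆) +
        (4 * g x y * (g x y * c ^ 2 - a * b)) • x := by
  have hhx : ⁅⁅x, y⁆, x⁆ = -((2 * g x y) • x) := by rw [← lie_skew, hx y]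
  have hyh : ⁅y, ⁅x, y⁆⁆ = -((2 * g x y) • y) := by
    rw [← lie_skew x y, lie_neg, hy x, hx.apply_comm h2 hy hg]
  have hzx : ⁅a • x + b • y + c • ⁅x, y⁆, x⁆ = (-(2 * g x y * c)) • x + (-b) • ⁅x, y⁆ := by
    simp only [add_lie, smul_lie, lie_self, ← lie_skew y x, hhx]
    module
  have hzh : ⁅a • x + b • y + c • ⁅x, y⁆, ⁅x, y⁆⁆ =
      (2 * g x y * a) • x + (-(2 * g x y * b)) • y := by
    simp only [add_lie, smul_lie, lie_self, hx y, hyh]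
    module
  rw [hzx, lie_add, lie_smul, lie_smul, hzx, hzh]
  module

theorem mul_eq_of_isExtremal (h2 : (2 : F) ≠ 0) (hx : IsExtremalWith g x)
    (hy : IsExtremalWith g y) (hg : g x y ≠ 0) {a b c : F}
    (hz : IsExtremal F (a • x + b • y + c • ⁅x, y⁆)) : a * b = g x y * c ^ 2 := by
  obtain ⟨s, hs⟩ := hz x
  rw [lie_lie_smul_add_smul_add_smul_lie h2 hx hy hg] at hs
  set d := s - 2 * g x y * b
  obtain ⟨ha, hb, hc⟩ := eq_zero_of_smul_add_smul_add_smul_lie_eq_zero h2 hx hg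
    (a := d * a - 4 * g x y * (g x y * c ^ 2 - a * b)) (b := d * b) (c := d * c)
    (by linear_combination (norm := module) -hs)
  have h4 : (4 : F) ≠ 0 := by
    rw [show (4 : F) = 2 * 2 by norm_num]
    exact mul_ne_zero h2 h2
  by_cases hd : d = 0
  · rw [hd, zero_mul, zero_sub, neg_eq_zero] at ha
    have : g x y * c ^ 2 - a * b = 0 := by simpa [h4, hg] using ha
    linear_combination -this
  · obtain rfl : b = 0 := by simpa [hd] using hb
    obtain rfl : c = 0 := by simpa [hd] using hc
    simp

theorem isExtremal_of_mul_eq (h2 : (2 : F) ≠ 0) (hx : IsExtremalWith g x)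
    (hy : IsExtremalWith g y) (hg : g x y ≠ 0) {a b c : F} (h : a * b = g x y * c ^ 2) :
    IsExtremal F (a • x + b • y + c • ⁅x, y⁆) := by
  have hy0 : y ≠ 0 := by rintro rfl; simp at hg
  by_cases ha : a = 0
  · obtain rfl : c = 0 := by simpa [ha, hg] using h.symm
    simpa [ha] using hy.isExtremal.smul b
  · have hz : a • x + b • y + c • ⁅x, y⁆ = a • extremalExp g y (-(c / a)) x := by
      rw [extremalExp_apply, ← lie_skew y x, hx.apply_comm h2 hy hg]
      match_scalars
      · ring
      · field_simp
        linear_combination h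
      · field_simp
    rw [hz]
    exact (hx.isExtremal.extremalExp h2 hy hy0 _).smul a

theorem isExtremal_smul_add_smul_add_smul_lie_iff (h2 : (2 : F) ≠ 0) (hx : IsExtremalWith g x)
    (hy : IsExtremalWith g y) (hg : g x y ≠ 0) {a b c : F} :
    IsExtremal F (a • x + b • y + c • ⁅x, y⁆) ↔ a * b = g x y * c ^ 2 :=
  ⟨mul_eq_of_isExtremal h2 hx hy hg, isExtremal_of_mul_eq h2 hx hy hg⟩

end Plane

theorem minors_eq_zero_of_conic {l a b c a' b' c' s t : F} (hl : l ≠ 0) (hs : s ≠ 0)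
    (ht : t ≠ 0) (hQ : a * b = l * c ^ 2) (hQ' : a' * b' = l * c' ^ 2)
    (hQst : (s * a + t * a') * (s * b + t * b') = l * (s * c + t * c') ^ 2) :
    a * b' = a' * b ∧ a * c' = a' * c ∧ b * c' = b' * c := by
  have hB : a * b' + a' * b = 2 * (l * c * c') := by
    have : s * t * (a * b' + a' * b - 2 * (l * c * c')) = 0 := by
      linear_combination hQst - s ^ 2 * hQ - t ^ 2 * hQ'
    simpa [hs, ht, sub_eq_zero] using this
  have hab : (a * b' - a' * b) ^ 2 = 0 := by
    linear_combination (a * b' + a' * b + 2 * (l * c * c')) * hB - 4 * a' * b' * hQ -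
      4 * l * c ^ 2 * hQ'
  have hac : l * (a * c' - a' * c) ^ 2 = 0 := by
    linear_combination -a ^ 2 * hQ' - a' ^ 2 * hQ + a * a' * hB
  have hbc : l * (b * c' - b' * c) ^ 2 = 0 := by
    linear_combination -b ^ 2 * hQ' - b' ^ 2 * hQ + b * b' * hB
  simp only [mul_eq_zero, hl, false_or, pow_eq_zero_iff two_ne_zero, sub_eq_zero] at hab hac hbc
  exact ⟨hab, hac, hbc⟩

theorem exists_eq_smul_of_minors_eq_zero {M : Type*} [AddCommGroup M] [Module F M]
    {u v w : M} {a b c a' b' c' : F} (hp0 : a • u + b • v + c • w ≠ 0)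
    (hab : a * b' = a' * b) (hac : a * c' = a' * c) (hbc : b * c' = b' * c) :
    ∃ μ : F, a' • u + b' • v + c' • w = μ • (a • u + b • v + c • w) := by
  have key : ∀ k k' : F, k ≠ 0 →
      k • (a' • u + b' • v + c' • w) = k' • (a • u + b • v + c • w) →
      ∃ μ : F, a' • u + b' • v + c' • w = μ • (a • u + b • v + c • w) :=
    fun k k' hk h => ⟨k' / k, by rw [div_eq_inv_mul, mul_smul, ← h, inv_smul_smul₀ hk]⟩
  by_cases ha : a = 0
  · by_cases hb : b = 0
    · have hc : c ≠ 0 := by rintro rfl; simp [ha, hb] at hp0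
      exact key c c' hc (by linear_combination (norm := module) (-hac) • u - hbc • v)
    · exact key b b' hb (by linear_combination (norm := module) (-hab) • u + hbc • w)
  · exact key a a' ha (by linear_combination (norm := module) hab • v + hac • w)

end ExtremalElements

theorem stmt19_general {F L : Type*} [Field F] [LieRing L] [LieAlgebra F L]
    (h2 : (2 : F) ≠ 0)
    (g : L →ₗ[F] L →ₗ[F] F)
    (x y : L)
    (hxe : ∀ w : L, ⁅x, ⁅x, w⁆⁆ = (2 * g x w) • x)
    (hye : ∀ w : L, ⁅y, ⁅y, w⁆⁆ = (2 * g y w) • y)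
    (hg : g x y ≠ 0) :
    (∀ α β γ : F, (α * g x y) • x + β • y + γ • ⁅x, y⁆ ≠ 0 →
      (((∀ w : L, ∃ c : F,
          ⁅(α * g x y) • x + β • y + γ • ⁅x, y⁆,
            ⁅(α * g x y) • x + β • y + γ • ⁅x, y⁆, w⁆⁆
          = c • ((α * g x y) • x + β • y + γ • ⁅x, y⁆))) ↔ α * β = γ ^ 2)) ∧
    (∀ p q r : L,
      p ∈ Submodule.span F {x, y, ⁅x, y⁆} →
      q ∈ Submodule.span F {x, y, ⁅x, y⁆} →
      r ∈ Submodule.span F {x, y, ⁅x, y⁆} →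
      p ≠ 0 → q ≠ 0 → r ≠ 0 →
      (∀ w : L, ∃ c : F, ⁅p, ⁅p, w⁆⁆ = c • p) →
      (∀ w : L, ∃ c : F, ⁅q, ⁅q, w⁆⁆ = c • q) →
      (∀ w : L, ∃ c : F, ⁅r, ⁅r, w⁆⁆ = c • r) →
      (¬∃ c : F, q = c • p) → (¬∃ c : F, r = c • p) → (¬∃ c : F, r = c • q) →
      r ∉ Submodule.span F {p, q}) := by
  have conic {a b c : F} := isExtremal_smul_add_smul_add_smul_lie_iff (a := a) (b := b) (c := c)
    h2 hxe hye hg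
  refine ⟨fun α β γ _ => ?_, ?_⟩
  · rw [← mul_right_inj' hg]
    exact conic.trans ⟨fun h => by linear_combination h, fun h => by linear_combination h⟩
  · intro p q r hp hq _ hp0 _ _ hpe hqe hre hqp hrp hrq hr
    obtain ⟨a, b, c, rfl⟩ := Submodule.mem_span_triple.mp hp
    obtain ⟨a', b', c', rfl⟩ := Submodule.mem_span_triple.mp hq
    obtain ⟨s, t, rfl⟩ := Submodule.mem_span_pair.mp hr
    have hs : s ≠ 0 := by rintro rfl; exact hrq ⟨t, by rw [zero_smul, zero_add]⟩
    have ht : t ≠ 0 := by rintro rfl; exact hrp ⟨s, by rw [zero_smul, add_zero]⟩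
    have hr_coords : s • (a • x + b • y + c • ⁅x, y⁆) + t • (a' • x + b' • y + c' • ⁅x, y⁆) =
        (s * a + t * a') • x + (s * b + t * b') • y + (s * c + t * c') • ⁅x, y⁆ := by module
    rw [hr_coords] at hre
    obtain ⟨hab, hac, hbc⟩ :=
      minors_eq_zero_of_conic hg hs ht (conic.1 hpe) (conic.1 hqe) (conic.1 hre)
    exact hqp (exists_eq_smul_of_minors_eq_zero hp0 hab hac hbc)

/-- Let `x, y` be extremal elements of `𝔤` (char F ≠ 2) with `g(x,y) ≠ 0`,
so `⟨x,y⟩ ≅ sl₂(F)` is spanned by `g(x,y)x, y, ⁅x,y⁆`. A nonzero element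
`α g(x,y)•x + β•y + γ•⁅x,y⁆` is extremal if and only if `αβ = γ²` (so the extremal
points of `⟨x,y⟩` form a conic), and every projective line of the plane on `⟨x,y⟩`
meets the set of extremal points in at most two points (no three distinct extremal
points of the plane are collinear). -/
theorem stmt19 {F L : Type*} [Field F] [LieRing L] [LieAlgebra F L]
    (h2 : (2 : F) ≠ 0)
    (g : L →ₗ[F] L →ₗ[F] F)
    (x y : L) (hx : x ≠ 0) (hy : y ≠ 0)
    (hxe : ∀ w : L, ⁅x, ⁅x, w⁆⁆ = (2 * g x w) • x)
    (hye : ∀ w : L, ⁅y, ⁅y, w⁆⁆ = (2 * g y w) • y)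
    (hg : g x y ≠ 0) :
    (∀ α β γ : F, (α * g x y) • x + β • y + γ • ⁅x, y⁆ ≠ 0 →
      (((∀ w : L, ∃ c : F,
          ⁅(α * g x y) • x + β • y + γ • ⁅x, y⁆,
            ⁅(α * g x y) • x + β • y + γ • ⁅x, y⁆, w⁆⁆
          = c • ((α * g x y) • x + β • y + γ • ⁅x, y⁆))) ↔ α * β = γ ^ 2)) ∧
    (∀ p q r : L,
      p ∈ Submodule.span F {x, y, ⁅x, y⁆} →
      q ∈ Submodule.span F {x, y, ⁅x, y⁆} →
      r ∈ Submodule.span F {x, y, ⁅x, y⁆} →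
      p ≠ 0 → q ≠ 0 → r ≠ 0 →
      (∀ w : L, ∃ c : F, ⁅p, ⁅p, w⁆⁆ = c • p) →
      (∀ w : L, ∃ c : F, ⁅q, ⁅q, w⁆⁆ = c • q) →
      (∀ w : L, ∃ c : F, ⁅r, ⁅r, w⁆⁆ = c • r) →
      (¬∃ c : F, q = c • p) → (¬∃ c : F, r = c • p) → (¬∃ c : F, r = c • q) →
      r ∉ Submodule.span F {p, q}) :=
  stmt19_general h2 g x y hxe hye hg
end
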